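/- Let λ ≥ 0. The weight ω on ℝ^{d+1}_+ = {(x,t) : x ∈ ℝ^d, t > 0} defined by ω(x,t) = log^λ(4/t) for 0 < t ≤ 1 and ω(x,t) = log^λ(4) for t > 1 is a Muckenhoupt A_1 weight: there exists C > 0 such that for every axis-parallel cube Q ⊂ ℝ^{d+1}_+, the average ⨍_Q ω dm ≤ C · ess inf_{y ∈ Q} ω(y). -/

import Mathlib

open MeasureTheory Real Set

noncomputable def wf (l t : ℝ) : ℝ :=
  if t ≤ 1 then (Real.log (4 / t)) ^ l else (Real.log 4) ^ l

lemma measurable_wf {l : ℝ} (hl : 0 ≤ l) : Measurable (wf l) := by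
  unfold wf
  exact Measurable.ite measurableSet_Iic
    ((Real.continuous_rpow_const hl).measurable.comp
      (measurable_const.div measurable_id).log) measurable_const

lemma one_le_log_four : (1:ℝ) ≤ Real.log 4 := by
  rw [Real.le_log_iff_exp_le (by norm_num)]
  calc Real.exp 1 ≤ 2.7182818286 := Real.exp_one_lt_d9.le
  _ ≤ 4 := by norm_num

lemma one_le_wf {l t : ℝ} (hl : 0 ≤ l) (ht : 0 < t) : 1 ≤ wf l t := by
  unfold wf
  split_ifs with h
  · refine Real.one_le_rpow (one_le_log_four.trans (Real.log_le_log (by norm_num) ?_)) hl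
    rw [le_div_iff₀ ht]; nlinarith
  · exact Real.one_le_rpow one_le_log_four hl

lemma wf_nonneg {l t : ℝ} (hl : 0 ≤ l) (ht : 0 < t) : 0 ≤ wf l t :=
  zero_le_one.trans (one_le_wf hl ht)

lemma wf_anti {l s t : ℝ} (hl : 0 ≤ l) (hs : 0 < s) (hst : s ≤ t) : wf l t ≤ wf l s := by
  have ht : 0 < t := hs.trans_le hst
  unfold wf
  split_ifs with h1 h2 h2
  · refine Real.rpow_le_rpow (Real.log_nonneg ?_) (Real.log_le_log (by positivity) ?_) hl
    · rw [le_div_iff₀ ht]; nlinarith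
    · exact div_le_div_of_nonneg_left (by norm_num) hs hst
  · exact absurd (hst.trans h1) h2
  · refine Real.rpow_le_rpow (Real.log_nonneg (by norm_num)) ?_ hl
    refine Real.log_le_log (by norm_num) ?_
    rw [le_div_iff₀ hs]; nlinarith
  · exact le_refl _
lemma rpow_add_le {x y l : ℝ} (hx : 0 ≤ x) (hy : 0 ≤ y) (hl : 0 ≤ l) :
    (x + y) ^ l ≤ 2 ^ l * (x ^ l + y ^ l) := by
  have h1 : x + y ≤ 2 * max x y := by
    rcases le_total x y with h | h
    · rw [max_eq_right h]; linarith
    · rw [max_eq_left h]; linarith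
  calc (x + y) ^ l ≤ (2 * max x y) ^ l := Real.rpow_le_rpow (by positivity) h1 hl
  _ = 2 ^ l * (max x y) ^ l := Real.mul_rpow (by norm_num) (le_max_of_le_left hx)
  _ ≤ 2 ^ l * (x ^ l + y ^ l) := by
      refine mul_le_mul_of_nonneg_left ?_ (Real.rpow_nonneg (by norm_num) l)
      rcases max_cases x y with ⟨h, _⟩ | ⟨h, _⟩ <;> rw [h]
      · exact le_add_of_nonneg_right (Real.rpow_nonneg hy l)
      · exact le_add_of_nonneg_left (Real.rpow_nonneg hx l)

lemma log_rpow_le {X l : ℝ} (hl : 0 ≤ l) (hX : 1 ≤ X) :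
    (Real.log X) ^ l ≤ (2 * l) ^ l * X ^ (1/2 : ℝ) := by
  rcases eq_or_lt_of_le hl with rfl | hl'
  · simpa [Real.rpow_zero] using Real.one_le_rpow hX (by norm_num)
  · have hX0 : (0:ℝ) ≤ X := zero_le_one.trans hX
    have hε : 0 < 1 / (2 * l) := by positivity
    have h1 : Real.log X ≤ 2 * l * X ^ (1 / (2 * l)) := by
      calc Real.log X ≤ X ^ (1 / (2 * l)) / (1 / (2 * l)) := Real.log_le_rpow_div hX0 hε
      _ = 2 * l * X ^ (1 / (2 * l)) := by
          rw [div_div_eq_mul_div, div_one]; ring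
    calc (Real.log X) ^ l ≤ (2 * l * X ^ (1 / (2 * l))) ^ l :=
          Real.rpow_le_rpow (Real.log_nonneg hX) h1 hl
    _ = (2 * l) ^ l * (X ^ (1 / (2 * l))) ^ l :=
          Real.mul_rpow (by positivity) (Real.rpow_nonneg hX0 _)
    _ = (2 * l) ^ l * X ^ (1/2 : ℝ) := by
          rw [← Real.rpow_mul hX0]
          congr 2
          field_simp

lemma wf_eq_c {l b h : ℝ} (hh : 0 < h) (hb : 0 ≤ b) :
    wf l (b + h) = (Real.log (4 / min (b + h) 1)) ^ l := by
  unfold wf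
  rcases le_or_gt (b + h) 1 with h' | h'
  · rw [if_pos h', min_eq_left h']
  · rw [if_neg (not_le.2 h'), min_eq_right h'.le, div_one]

lemma wf_le {l b h t : ℝ} (hl : 0 ≤ l) (hb : 0 ≤ b) (hh : 0 < h) (ht : t ∈ Set.Ioc b (b + h)) :
    wf l t ≤ 2 ^ l * (wf l (b + h) + (2 * l) ^ l * (min (b + h) 1 / t) ^ (1/2 : ℝ)) := by
  obtain ⟨ht1, ht2⟩ := ht
  have ht0 : 0 < t := lt_of_le_of_lt hb ht1
  set c := min (b + h) 1 with hc
  have hc0 : 0 < c := lt_min (by linarith) one_pos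
  have hc1 : c ≤ 1 := min_le_right _ _
  have hW : wf l (b + h) = (Real.log (4 / c)) ^ l := wf_eq_c hh hb
  have hWnn : 0 ≤ Real.log (4 / c) := Real.log_nonneg (by rw [le_div_iff₀ hc0]; nlinarith)
  have hBnn : (0:ℝ) ≤ (2 * l) ^ l * (c / t) ^ (1/2 : ℝ) := by positivity
  by_cases h1 : t ≤ 1
  · have htc : t ≤ c := le_min ht2 h1
    have hct : 1 ≤ c / t := (one_le_div ht0).2 htc
    have key : Real.log (4 / t) = Real.log (4 / c) + Real.log (c / t) := by
      rw [← Real.log_mul (by positivity) (by positivity)]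
      congr 1
      field_simp
    rw [wf, if_pos h1, key, hW]
    calc (Real.log (4 / c) + Real.log (c / t)) ^ l
        ≤ 2 ^ l * ((Real.log (4 / c)) ^ l + (Real.log (c / t)) ^ l) :=
          rpow_add_le hWnn (Real.log_nonneg hct) hl
      _ ≤ 2 ^ l * ((Real.log (4 / c)) ^ l + (2 * l) ^ l * (c / t) ^ (1/2 : ℝ)) := by
          refine mul_le_mul_of_nonneg_left (add_le_add le_rfl ?_) (by positivity)
          exact log_rpow_le hl hct
  · have hbh1 : ¬ (b + h ≤ 1) := fun hcon => h1 (ht2.trans hcon)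
    rw [wf, if_neg h1]
    have hA : (0:ℝ) ≤ (Real.log 4) ^ l := Real.rpow_nonneg (Real.log_nonneg (by norm_num)) l
    have h2l : (1:ℝ) ≤ 2 ^ l := Real.one_le_rpow one_le_two hl
    have hWeq : wf l (b + h) = (Real.log 4) ^ l := by rw [wf, if_neg hbh1]
    calc (Real.log 4) ^ l ≤ 2 ^ l * (Real.log 4) ^ l := le_mul_of_one_le_left hA h2l
    _ ≤ 2 ^ l * (wf l (b + h) + (2 * l) ^ l * (c / t) ^ (1/2 : ℝ)) := by
        refine mul_le_mul_of_nonneg_left ?_ (by positivity)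
        rw [hWeq]
        exact le_add_of_nonneg_right hBnn

lemma integral_wf_le {l b h : ℝ} (hl : 0 ≤ l) (hb : 0 ≤ b) (hh : 0 < h) :
    IntegrableOn (wf l) (Set.Ioc b (b + h)) volume ∧
    ∫ t in Set.Ioc b (b + h), wf l t ≤ 2 ^ l * (1 + 2 * (2 * l) ^ l) * (h * wf l (b + h)) := by
  set c := min (b + h) 1 with hc
  set W := wf l (b + h) with hWdef
  set K := (2 * l) ^ l with hK
  have hc0 : 0 < c := lt_min (by linarith) one_pos
  have hW1 : 1 ≤ W := one_le_wf hl (by linarith)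
  have hP0 : (0:ℝ) < 2 ^ l := Real.rpow_pos_of_pos two_pos l
  have hK0 : (0:ℝ) ≤ K := Real.rpow_nonneg (by positivity) l
  set G : ℝ → ℝ := fun t => 2 ^ l * W + 2 ^ l * (K * Real.sqrt c) * t ^ (-(1/2) : ℝ) with hG
  have hGle : ∀ t ∈ Set.Ioc b (b + h), wf l t ≤ G t := by
    intro t ht
    have ht0 : 0 < t := lt_of_le_of_lt hb ht.1
    have h2 := wf_le hl hb hh ht
    have heq : (c / t) ^ (1/2 : ℝ) = Real.sqrt c * t ^ (-(1/2) : ℝ) := by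
      rw [Real.div_rpow hc0.le ht0.le, Real.rpow_neg ht0.le, Real.sqrt_eq_rpow, div_eq_mul_inv]
    rw [heq] at h2
    calc wf l t ≤ 2 ^ l * (W + K * (Real.sqrt c * t ^ (-(1/2) : ℝ))) := h2
    _ = G t := by rw [hG]; ring
  have hGint : IntegrableOn G (Set.Ioc b (b + h)) := by
    apply Integrable.add
    · exact integrableOn_const (by rw [Real.volume_Ioc]; exact ENNReal.ofReal_ne_top)
    · exact ((intervalIntegral.intervalIntegrable_rpow' (by norm_num)).1).const_mul _
  have hwint : IntegrableOn (wf l) (Set.Ioc b (b + h)) := by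
    refine Integrable.mono' hGint ((measurable_wf hl).aestronglyMeasurable) ?_
    filter_upwards [ae_restrict_mem measurableSet_Ioc] with t ht
    rw [Real.norm_of_nonneg (wf_nonneg hl (lt_of_le_of_lt hb ht.1))]
    exact hGle t ht
  refine ⟨hwint, ?_⟩
  have hsum : Real.sqrt c ≤ Real.sqrt (b + h) + Real.sqrt b :=
    (Real.sqrt_le_sqrt (min_le_left _ _)).trans (le_add_of_nonneg_right (Real.sqrt_nonneg b))
  have hdiff : 0 ≤ Real.sqrt (b + h) - Real.sqrt b :=
    sub_nonneg.2 (Real.sqrt_le_sqrt (by linarith))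
  have hprod : (Real.sqrt (b + h) + Real.sqrt b) * (Real.sqrt (b + h) - Real.sqrt b) = h := by
    have e1 : Real.sqrt (b + h) * Real.sqrt (b + h) = b + h := Real.mul_self_sqrt (by linarith)
    have e2 : Real.sqrt b * Real.sqrt b = b := Real.mul_self_sqrt hb
    nlinarith [e1, e2]
  have key : Real.sqrt c * (2 * (Real.sqrt (b + h) - Real.sqrt b)) ≤ 2 * h := by
    calc Real.sqrt c * (2 * (Real.sqrt (b + h) - Real.sqrt b))
        = 2 * (Real.sqrt c * (Real.sqrt (b + h) - Real.sqrt b)) := by ring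
      _ ≤ 2 * ((Real.sqrt (b + h) + Real.sqrt b) * (Real.sqrt (b + h) - Real.sqrt b)) := by
          have := mul_le_mul_of_nonneg_right hsum hdiff
          linarith
      _ = 2 * h := by rw [hprod]
  have hI : ∫ t in Set.Ioc b (b + h), t ^ (-(1/2) : ℝ)
      = 2 * (Real.sqrt (b + h) - Real.sqrt b) := by
    rw [← intervalIntegral.integral_of_le (by linarith : b ≤ b + h)]
    rw [integral_rpow (Or.inl (by norm_num))]
    have he : (-(1/2) : ℝ) + 1 = 1/2 := by norm_num
    rw [he, Real.sqrt_eq_rpow, Real.sqrt_eq_rpow]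
    ring
  calc ∫ t in Set.Ioc b (b + h), wf l t
      ≤ ∫ t in Set.Ioc b (b + h), G t := setIntegral_mono_on hwint hGint measurableSet_Ioc hGle
    _ = 2 ^ l * W * h + 2 ^ l * (K * Real.sqrt c) * (2 * (Real.sqrt (b + h) - Real.sqrt b)) := by
        rw [hG]
        beta_reduce
        rw [integral_add (show IntegrableOn (fun _ => 2 ^ l * W) (Set.Ioc b (b + h)) volume from integrableOn_const (by rw [Real.volume_Ioc]; exact ENNReal.ofReal_ne_top))
          (show IntegrableOn (fun t => 2 ^ l * (K * Real.sqrt c) * t ^ (-(1/2) : ℝ)) (Set.Ioc b (b + h)) volume from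
            ((intervalIntegral.intervalIntegrable_rpow' (a := b) (b := b + h) (by norm_num)).1).const_mul _)]
        rw [setIntegral_const, integral_const_mul, hI, measureReal_def, Real.volume_Ioc, add_sub_cancel_left,
          ENNReal.toReal_ofReal hh.le, smul_eq_mul]
        ring
    _ ≤ 2 ^ l * (1 + 2 * K) * (h * W) := by
        have t1 : 2 ^ l * (K * Real.sqrt c) * (2 * (Real.sqrt (b + h) - Real.sqrt b))
            ≤ 2 ^ l * K * (2 * h) := by
          calc 2 ^ l * (K * Real.sqrt c) * (2 * (Real.sqrt (b + h) - Real.sqrt b))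
              = 2 ^ l * K * (Real.sqrt c * (2 * (Real.sqrt (b + h) - Real.sqrt b))) := by ring
            _ ≤ 2 ^ l * K * (2 * h) := mul_le_mul_of_nonneg_left key (by positivity)
        nlinarith [mul_nonneg (mul_nonneg (mul_nonneg hP0.le hK0) hh.le) (sub_nonneg.2 hW1)]

lemma cube_integral (d : ℕ) (w : ℝ → ℝ) (a : Fin (d + 1) → ℝ) (h : ℝ) (hh : 0 < h) :
    ∫ y in Set.univ.pi (fun i => Set.Ioc (a i) (a i + h)), w (y (Fin.last d)) =
      h ^ d * ∫ t in Set.Ioc (a (Fin.last d)) (a (Fin.last d) + h), w t := by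
  set S := Set.univ.pi (fun i => Set.Ioc (a i) (a i + h)) with hSdef
  have hS : MeasurableSet S := MeasurableSet.univ_pi fun i => measurableSet_Ioc
  rw [← integral_indicator hS]
  have hpt : ∀ y : Fin (d + 1) → ℝ, S.indicator (fun y => w (y (Fin.last d))) y
      = ∏ i, (Set.Ioc (a i) (a i + h)).indicator
          (fun t => if i = Fin.last d then w t else 1) (y i) := by
    intro y
    by_cases hy : y ∈ S
    · rw [Set.indicator_of_mem hy]
      have hmem : ∀ i, y i ∈ Set.Ioc (a i) (a i + h) := fun i => hy i (Set.mem_univ i)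
      rw [Finset.prod_congr rfl (fun i _ => Set.indicator_of_mem (hmem i) _)]
      rw [Finset.prod_ite_eq' Finset.univ (Fin.last d) (fun i => w (y i))]
      simp
    · rw [Set.indicator_of_notMem hy]
      rw [hSdef, Set.mem_pi] at hy
      push_neg at hy
      obtain ⟨i, _, hi⟩ := hy
      exact (Finset.prod_eq_zero (Finset.mem_univ i) (Set.indicator_of_notMem hi _)).symm
  simp_rw [hpt]
  rw [volume_pi, MeasureTheory.integral_fintype_prod_eq_prod
    (fun i t => (Set.Ioc (a i) (a i + h)).indicator (fun t => if i = Fin.last d then w t else 1) t)]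
  have hfac : ∀ i : Fin (d + 1),
      (∫ t, (Set.Ioc (a i) (a i + h)).indicator (fun t => if i = Fin.last d then w t else 1) t)
      = if i = Fin.last d then ∫ t in Set.Ioc (a (Fin.last d)) (a (Fin.last d) + h), w t
        else h := by
    intro i
    rw [integral_indicator measurableSet_Ioc]
    by_cases hi : i = Fin.last d
    · subst hi; simp
    · rw [if_neg hi]
      simp only [if_neg hi]
      rw [setIntegral_const, measureReal_def, Real.volume_Ioc, add_sub_cancel_left,
        ENNReal.toReal_ofReal hh.le, smul_eq_mul, mul_one]
  rw [Finset.prod_congr rfl (fun i _ => hfac i)]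
  rw [← Finset.mul_prod_erase Finset.univ _ (Finset.mem_univ (Fin.last d))]
  rw [if_pos rfl]
  have : ∀ i ∈ Finset.univ.erase (Fin.last d),
      (if i = Fin.last d then ∫ t in Set.Ioc (a (Fin.last d)) (a (Fin.last d) + h), w t else h)
        = h := by
    intro i hi
    rw [if_neg (Finset.ne_of_mem_erase hi)]
  rw [Finset.prod_congr rfl this, Finset.prod_const,
    Finset.card_erase_of_mem (Finset.mem_univ _), Finset.card_univ, Fintype.card_fin]
  norm_num [mul_comm]

/-- The weight `ω(x,t) = (log (4/t))^λ` for `0 < t ≤ 1`, `= (log 4)^λ` for `t > 1`, `λ ≥ 0`,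
is a Muckenhoupt `A₁` weight on the upper half space: averages over cubes contained in the
upper half space are bounded by a constant times the essential infimum over the cube. -/
theorem stmt1 (d : ℕ) (hd : 1 ≤ d) (l : ℝ) (hl : 0 ≤ l) :
    ∃ C : ℝ, 0 < C ∧
      ∀ (a : Fin (d + 1) → ℝ) (h : ℝ), 0 < h →
        (∀ x ∈ Set.univ.pi (fun i => Set.Ioc (a i) (a i + h)), 0 < x (Fin.last d)) →
        (⨍ y in Set.univ.pi (fun i => Set.Ioc (a i) (a i + h)),
            (if y (Fin.last d) ≤ 1 then (Real.log (4 / y (Fin.last d))) ^ l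
              else (Real.log 4) ^ l)) ≤
          C * essInf
            (fun y => if y (Fin.last d) ≤ 1 then (Real.log (4 / y (Fin.last d))) ^ l
              else (Real.log 4) ^ l)
            (volume.restrict (Set.univ.pi (fun i => Set.Ioc (a i) (a i + h)))) := by
  have hK0 : (0:ℝ) ≤ (2 * l) ^ l := Real.rpow_nonneg (by linarith) l
  have hP0 : (0:ℝ) < 2 ^ l := Real.rpow_pos_of_pos two_pos l
  have hC0 : (0:ℝ) < 2 ^ l * (1 + 2 * (2 * l) ^ l) := by nlinarith
  refine ⟨2 ^ l * (1 + 2 * (2 * l) ^ l), hC0, ?_⟩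
  intro a h hh hpos
  have hb : 0 ≤ a (Fin.last d) := by
    by_contra hbneg
    push_neg at hbneg
    have hδ : 0 < min h (-(a (Fin.last d))) := lt_min hh (by linarith)
    have hxS : (fun i => a i + min h (-(a (Fin.last d))) / 2) ∈
        Set.univ.pi (fun i => Set.Ioc (a i) (a i + h)) := by
      intro i _
      refine ⟨by linarith, ?_⟩
      have : min h (-(a (Fin.last d))) ≤ h := min_le_left _ _
      simp only []
      linarith
    have h1 := hpos _ hxS
    have h2 : min h (-(a (Fin.last d))) ≤ -(a (Fin.last d)) := min_le_right _ _
    have h1' : 0 < a (Fin.last d) + min h (-(a (Fin.last d))) / 2 := h1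
    linarith
  show (⨍ y in Set.univ.pi (fun i => Set.Ioc (a i) (a i + h)), wf l (y (Fin.last d))) ≤
      2 ^ l * (1 + 2 * (2 * l) ^ l) *
        essInf (fun y => wf l (y (Fin.last d)))
          (volume.restrict (Set.univ.pi (fun i => Set.Ioc (a i) (a i + h))))
  set b := a (Fin.last d) with hbdef
  set S := Set.univ.pi (fun i => Set.Ioc (a i) (a i + h)) with hSdef
  have hS : MeasurableSet S := MeasurableSet.univ_pi fun i => measurableSet_Ioc
  obtain ⟨hwint, hbound⟩ := integral_wf_le (b := b) hl hb hh
  have hFmeas : Measurable (fun y : Fin (d + 1) → ℝ => wf l (y (Fin.last d))) :=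
    (measurable_wf hl).comp (measurable_pi_apply _)
  have havg : (⨍ y in S, wf l (y (Fin.last d))) = h⁻¹ * ∫ t in Set.Ioc b (b + h), wf l t := by
    rw [setAverage_eq, hSdef, cube_integral d (wf l) a h hh]
    have hvol : (volume (Set.univ.pi (fun i => Set.Ioc (a i) (a i + h)))).toReal
        = h ^ (d + 1) := by
      rw [volume_pi_pi]
      simp only [Real.volume_Ioc, add_sub_cancel_left]
      rw [Finset.prod_const, Finset.card_univ, Fintype.card_fin,
        ← ENNReal.ofReal_pow hh.le, ENNReal.toReal_ofReal (by positivity)]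
    rw [measureReal_def, hvol, smul_eq_mul, pow_succ]
    rw [mul_inv, ← hbdef]
    field_simp
  have hWle : wf l (b + h) ≤ essInf (fun y : Fin (d + 1) → ℝ => wf l (y (Fin.last d)))
      (volume.restrict S) := by
    have hev : ∀ᵐ y ∂(volume.restrict S), wf l (b + h) ≤ wf l (y (Fin.last d)) := by
      filter_upwards [ae_restrict_mem hS] with y hy
      have hmem : y (Fin.last d) ∈ Set.Ioc b (b + h) := hy (Fin.last d) (Set.mem_univ _)
      exact wf_anti hl (lt_of_le_of_lt hb hmem.1) hmem.2
    have hfreq : ∃ᶠ y in (MeasureTheory.ae (volume.restrict S)),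
        wf l (y (Fin.last d)) ≤ wf l (b + h / 2) := by
      rw [MeasureTheory.frequently_ae_iff,
        Measure.restrict_apply (measurableSet_le hFmeas measurable_const)]
      intro h0
      have hsub : (Set.univ.pi fun i => Set.Ioc (a i + h / 2) (a i + h)) ⊆
          {y : Fin (d + 1) → ℝ | wf l (y (Fin.last d)) ≤ wf l (b + h / 2)} ∩ S := by
        intro y hy
        have hmem : ∀ i, y i ∈ Set.Ioc (a i + h / 2) (a i + h) := fun i => hy i (Set.mem_univ i)
        refine ⟨?_, fun i _ => ⟨by linarith [(hmem i).1], (hmem i).2⟩⟩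
        have h1 := hmem (Fin.last d)
        exact wf_anti hl (by positivity) h1.1.le
      have hge := measure_mono (μ := (volume : Measure (Fin (d + 1) → ℝ))) hsub
      rw [h0] at hge
      have hzero : volume (Set.univ.pi fun i => Set.Ioc (a i + h / 2) (a i + h)) = 0 :=
        le_antisymm hge zero_le
      have hvol' : volume (Set.univ.pi fun i => Set.Ioc (a i + h / 2) (a i + h))
          = ENNReal.ofReal (h / 2) ^ (d + 1) := by
        rw [volume_pi_pi]
        have : ∀ i : Fin (d + 1), volume (Set.Ioc (a i + h / 2) (a i + h))
            = ENNReal.ofReal (h / 2) := by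
          intro i
          rw [Real.volume_Ioc]
          congr 1
          ring
        rw [Finset.prod_congr rfl (fun i _ => this i), Finset.prod_const, Finset.card_univ,
          Fintype.card_fin]
      rw [hvol'] at hzero
      exact pow_ne_zero _ (ENNReal.ofReal_pos.2 (by linarith)).ne' hzero
    have hcob : Filter.IsCoboundedUnder (· ≥ ·) (MeasureTheory.ae (volume.restrict S))
        (fun y : Fin (d + 1) → ℝ => wf l (y (Fin.last d))) :=
      Filter.IsCoboundedUnder.of_frequently_le hfreq
    exact Filter.le_liminf_of_le hcob hev
  rw [havg]
  calc h⁻¹ * ∫ t in Set.Ioc b (b + h), wf l t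
      ≤ h⁻¹ * (2 ^ l * (1 + 2 * (2 * l) ^ l) * (h * wf l (b + h))) :=
        mul_le_mul_of_nonneg_left hbound (inv_nonneg.2 hh.le)
    _ = 2 ^ l * (1 + 2 * (2 * l) ^ l) * wf l (b + h) := by
        field_simp
    _ ≤ _ := mul_le_mul_of_nonneg_left hWle hC0.le
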